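/- If S ∈ hom(𝓗₋₊) satisfies 𝔉ₛ(S) ≥ 0 (positive semidefinite on 𝓗₊₋), then 𝔉ₛ(e^{S}) ≥ 0, where e^{S} denotes the operator exponential of S. -/

import Mathlib

/-!
Fix an orthonormal basis `b` of `𝓗₊`. Then `tmp (θ bᵢ) bⱼ` and `tpm bᵢ (θ bⱼ)` are orthonormal
bases of `𝓗₋₊` and `𝓗₊₋`, and in these bases the matrix of `𝔉ₛ(T)` is the realignment
`R(M) p q = M (q₁, p₁) (q₂, p₂)` of the matrix `M` of `T`. As `R(Ā ⊗ₖ A)` is the rank-one matrix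
`a aᴴ` with `a (i, j) = A i j`, a matrix has positive semidefinite realignment exactly when it is a
sum of matrices `Ā ⊗ₖ A`. Such sums are closed under products, so `R(M) ≥ 0` gives `R(Mⁿ) ≥ 0` for
every `n`, and summing the exponential series gives `𝔉ₛ(e^S) ≥ 0`.
-/

open LinearMap
open scoped InnerProductSpace ComplexInnerProductSpace ComplexOrder Kronecker

namespace Matrix

variable {ι R : Type*}

def realign [Semiring R] : Matrix (ι × ι) (ι × ι) R ≃ₗ[R] Matrix (ι × ι) (ι × ι) R where
  toFun M := of fun p q => M (q.1, p.1) (q.2, p.2)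
  invFun N := of fun a b => N (a.2, b.2) (a.1, b.1)
  map_add' _ _ := rfl
  map_smul' _ _ := rfl
  left_inv _ := rfl
  right_inv _ := rfl

@[simp]
theorem realign_apply [Semiring R] (M : Matrix (ι × ι) (ι × ι) R) (p q : ι × ι) :
    realign M p q = M (q.1, p.1) (q.2, p.2) := rfl

theorem realign_kronecker [CommSemiring R] (A B : Matrix ι ι R) :
    realign (A ⊗ₖ B) = vecMulVec (fun p => B p.1 p.2) (fun p => A p.1 p.2) := by
  ext p q
  simp [vecMulVec_apply, mul_comm]

theorem posSemidef_realign_kronecker [CommRing R] [PartialOrder R] [StarRing R]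
    [StarOrderedRing R] [Fintype ι] (A : Matrix ι ι R) :
    (realign (A.map (starRingEnd R) ⊗ₖ A)).PosSemidef := by
  rw [realign_kronecker]
  exact posSemidef_vecMulVec_self_star _

variable (ι R) in
def krausSubmonoid [CommSemiring R] [StarRing R] [Fintype ι] [DecidableEq ι] :
    Submonoid (Matrix (ι × ι) (ι × ι) R) where
  carrier := Set.range fun A : Matrix ι ι R => A.map (starRingEnd R) ⊗ₖ A
  mul_mem' := by
    rintro _ _ ⟨A, rfl⟩ ⟨B, rfl⟩
    exact ⟨A * B, by simp only [Matrix.map_mul, mul_kronecker_mul]⟩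
  one_mem' :=
    ⟨1, by simp only [map_one (starRingEnd R), map_zero, Matrix.map_one, one_kronecker_one]⟩

variable {𝕜 : Type*} [RCLike 𝕜] [Fintype ι] [DecidableEq ι]

theorem mem_subsemiringClosure_krausSubmonoid_iff {M : Matrix (ι × ι) (ι × ι) 𝕜} :
    M ∈ (krausSubmonoid ι 𝕜).subsemiringClosure ↔ (realign M).PosSemidef := by
  rw [Submonoid.subsemiringClosure_mem]
  constructor
  · intro hM
    induction hM using AddSubmonoid.closure_induction with
    | mem _ h => obtain ⟨A, rfl⟩ := h; exact posSemidef_realign_kronecker A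
    | zero => simpa using PosSemidef.zero
    | add _ _ _ _ hM hN => simpa using hM.add hN
  · intro hM
    obtain ⟨m, v, hv⟩ := posSemidef_iff_eq_sum_vecMulVec.mp hM
    let A (i : Fin m) : Matrix ι ι 𝕜 := of (Function.curry (v i))
    have hM_sum : M = ∑ i, (A i).map (starRingEnd 𝕜) ⊗ₖ A i := by
      apply realign.injective
      simp_rw [hv, map_sum, realign_kronecker]
      rfl
    rw [hM_sum]
    exact AddSubmonoid.sum_mem _ fun i _ => AddSubmonoid.subset_closure ⟨A i, rfl⟩

theorem PosSemidef.realign_pow {M : Matrix (ι × ι) (ι × ι) 𝕜} (hM : (realign M).PosSemidef)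
    (n : ℕ) : (realign (M ^ n)).PosSemidef := by
  rw [← mem_subsemiringClosure_krausSubmonoid_iff] at hM ⊢
  exact pow_mem hM n

end Matrix

namespace OrthonormalBasis

variable {𝕜 E F G ι κ : Type*} [RCLike 𝕜] [Fintype ι] [Fintype κ]
  [NormedAddCommGroup E] [InnerProductSpace 𝕜 E] [NormedAddCommGroup F] [InnerProductSpace 𝕜 F]
  [NormedAddCommGroup G] [InnerProductSpace 𝕜 G]

theorem span_range_eq_top (b : OrthonormalBasis ι 𝕜 E) : Submodule.span 𝕜 (Set.range b) = ⊤ := by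
  simpa using b.toBasis.span_eq

noncomputable def mapAntiunitary (b : OrthonormalBasis ι 𝕜 E) (θ : E ≃ₗ⋆[𝕜] F)
    (hθ : ∀ x x' : E, ⟪x, x'⟫_𝕜 = ⟪θ x', θ x⟫_𝕜) : OrthonormalBasis ι 𝕜 F :=
  .mk (v := fun i => θ (b i))
    (by
      classical
      refine orthonormal_iff_ite.mpr fun i j => ?_
      rw [← hθ, orthonormal_iff_ite.mp b.orthonormal]
      exact if_congr eq_comm rfl rfl)
    (by
      rw [Set.range_comp', Submodule.span_image_linearEquiv, b.span_range_eq_top,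
        Submodule.map_top, LinearEquiv.range])

@[simp]
theorem mapAntiunitary_apply (b : OrthonormalBasis ι 𝕜 E) (θ : E ≃ₗ⋆[𝕜] F)
    (hθ : ∀ x x' : E, ⟪x, x'⟫_𝕜 = ⟪θ x', θ x⟫_𝕜) (i : ι) : b.mapAntiunitary θ hθ i = θ (b i) := by
  simp [mapAntiunitary]

noncomputable def tensor (t : E →ₗ[𝕜] F →ₗ[𝕜] G)
    (ht : ∀ x y x' y', ⟪t x y, t x' y'⟫_𝕜 = ⟪x, x'⟫_𝕜 * ⟪y, y'⟫_𝕜)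
    (ht_span : ⊤ ≤ Submodule.span 𝕜 (Set.range fun p : E × F => t p.1 p.2))
    (b : OrthonormalBasis ι 𝕜 E) (b' : OrthonormalBasis κ 𝕜 F) :
    OrthonormalBasis (ι × κ) 𝕜 G :=
  .mk (v := fun p => t (b p.1) (b' p.2))
    (by
      classical
      refine orthonormal_iff_ite.mpr fun p q => ?_
      rw [ht, orthonormal_iff_ite.mp b.orthonormal, orthonormal_iff_ite.mp b'.orthonormal,
        ite_zero_mul_ite_zero, mul_one]
      exact if_congr Prod.ext_iff.symm rfl rfl)
    (by
      refine ht_span.trans (Submodule.span_le.mpr ?_)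
      rintro _ ⟨⟨x, y⟩, rfl⟩
      have hxy : t x y ∈ Submodule.map₂ t (Submodule.span 𝕜 (Set.range b))
          (Submodule.span 𝕜 (Set.range b')) := by
        rw [b.span_range_eq_top, b'.span_range_eq_top]
        exact Submodule.apply_mem_map₂ t Submodule.mem_top Submodule.mem_top
      rw [Submodule.map₂_span_span] at hxy
      refine Submodule.span_mono ?_ hxy
      rintro _ ⟨_, ⟨i, rfl⟩, _, ⟨j, rfl⟩, rfl⟩
      exact ⟨(i, j), rfl⟩)

@[simp]
theorem tensor_apply (t : E →ₗ[𝕜] F →ₗ[𝕜] G)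
    (ht : ∀ x y x' y', ⟪t x y, t x' y'⟫_𝕜 = ⟪x, x'⟫_𝕜 * ⟪y, y'⟫_𝕜)
    (ht_span : ⊤ ≤ Submodule.span 𝕜 (Set.range fun p : E × F => t p.1 p.2))
    (b : OrthonormalBasis ι 𝕜 E) (b' : OrthonormalBasis κ 𝕜 F) (p : ι × κ) :
    tensor t ht ht_span b b' p = t (b p.1) (b' p.2) := by
  simp [tensor]

end OrthonormalBasis

theorem LinearMap.isPositive_of_forall_inner_nonneg {E : Type*} [NormedAddCommGroup E]
    [InnerProductSpace ℂ E] {T : E →ₗ[ℂ] E} (h : ∀ x, 0 ≤ ⟪x, T x⟫) : T.IsPositive := by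
  refine T.isPositive_iff_complex.mpr fun x => ?_
  have hreal : star ⟪x, T x⟫ = ⟪x, T x⟫ := (IsSelfAdjoint.of_nonneg (h x)).star_eq
  rw [← inner_conj_symm, starRingEnd_apply, hreal]
  exact ⟨RCLike.conj_eq_iff_re.mp hreal, (Complex.nonneg_iff.mp (h x)).1⟩

section Exponential

variable {𝔸 : Type*} [NormedRing 𝔸] [NormedAlgebra ℂ 𝔸] [CompleteSpace 𝔸]

theorem apply_exp_nonneg_of_apply_pow_nonneg (φ : 𝔸 →L[ℂ] ℂ) {a : 𝔸}
    (h : ∀ n, 0 ≤ φ (a ^ n)) : 0 ≤ φ (NormedSpace.exp a) := by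
  rw [NormedSpace.exp_eq_tsum ℂ, φ.map_tsum (NormedSpace.expSeries_summable' a)]
  refine tsum_nonneg fun n => ?_
  rw [map_smul, smul_eq_mul]
  exact mul_nonneg (inv_nonneg.mpr (Nat.cast_nonneg _)) (h n)

theorem inner_map_exp_nonneg [FiniteDimensional ℂ 𝔸] {E : Type*} [NormedAddCommGroup E]
    [InnerProductSpace ℂ E] (Φ : 𝔸 →ₗ[ℂ] E →ₗ[ℂ] E) {a : 𝔸} (h : ∀ n, (Φ (a ^ n)).IsPositive)
    (w : E) : 0 ≤ ⟪w, Φ (NormedSpace.exp a) w⟫ :=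
  apply_exp_nonneg_of_apply_pow_nonneg (innerₛₗ ℂ w ∘ₗ applyₗ w ∘ₗ Φ).toContinuousLinearMap
    fun n => (h n).inner_nonneg_right w

end Exponential

theorem sft_exp_nonneg_general
{Hp Hm Hmp Hpm : Type}
    [NormedAddCommGroup Hp] [InnerProductSpace ℂ Hp] [FiniteDimensional ℂ Hp]
    [NormedAddCommGroup Hm] [InnerProductSpace ℂ Hm]
    [NormedAddCommGroup Hmp] [InnerProductSpace ℂ Hmp] [FiniteDimensional ℂ Hmp]
    [NormedAddCommGroup Hpm] [InnerProductSpace ℂ Hpm]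
(θ : Hp ≃ₗ⋆[ℂ] Hm)
    (hθ : ∀ x x' : Hp, ⟪x, x'⟫ = ⟪θ x', θ x⟫)
(tmp : Hm →ₗ[ℂ] Hp →ₗ[ℂ] Hmp) (tpm : Hp →ₗ[ℂ] Hm →ₗ[ℂ] Hpm)
    (htmp : ∀ (y : Hm) (x : Hp) (y' : Hm) (x' : Hp),
      ⟪tmp y x, tmp y' x'⟫ = ⟪y, y'⟫ * ⟪x, x'⟫)
    (htpm : ∀ (x : Hp) (y : Hm) (x' : Hp) (y' : Hm),
      ⟪tpm x y, tpm x' y'⟫ = ⟪x, x'⟫ * ⟪y, y'⟫)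
    (hmp_span : ⊤ ≤ Submodule.span ℂ (Set.range fun p : Hm × Hp => tmp p.1 p.2))
    (hpm_span : ⊤ ≤ Submodule.span ℂ (Set.range fun p : Hp × Hm => tpm p.1 p.2))
(Fs : (Hmp →L[ℂ] Hmp) → (Hpm →L[ℂ] Hpm))
    (hFs : ∀ (T : Hmp →L[ℂ] Hmp) (x x' : Hp) (y y' : Hm),
      ⟪tpm x y, Fs T (tpm x' y')⟫ = ⟪tmp (θ x') x, T (tmp y' (θ.symm y))⟫)
    (S : Hmp →L[ℂ] Hmp) (hS : ∀ w : Hpm, 0 ≤ ⟪w, Fs S w⟫) :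
    ∀ w : Hpm, 0 ≤ ⟪w, Fs (NormedSpace.exp S) w⟫ := by
  classical
  let b := stdOrthonormalBasis ℂ Hp
  let bθ := b.mapAntiunitary θ hθ
  let U := bθ.tensor tmp htmp hmp_span b
  let V := b.tensor tpm htpm hpm_span bθ
  have hFsV (T : Hmp →L[ℂ] Hmp) :
      toMatrix V.toBasis V.toBasis (Fs T) = Matrix.realign (toMatrix U.toBasis U.toBasis T) := by
    ext p q
    simp only [toMatrix_apply, Matrix.realign_apply, OrthonormalBasis.coe_toBasis_repr_apply,
      OrthonormalBasis.coe_toBasis, OrthonormalBasis.repr_apply_apply]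
    simp [U, V, bθ, hFs]
  let Φ : (Hmp →L[ℂ] Hmp) →ₗ[ℂ] Hpm →ₗ[ℂ] Hpm :=
    (toMatrix V.toBasis V.toBasis).symm.toLinearMap ∘ₗ Matrix.realign.toLinearMap ∘ₗ
      (toMatrix U.toBasis U.toBasis).toLinearMap ∘ₗ ContinuousLinearMap.coeLM ℂ
  have hΦ (T : Hmp →L[ℂ] Hmp) : Φ T = Fs T := by
    simp [Φ, ← hFsV]
  have hS_realign : (Matrix.realign (toMatrix U.toBasis U.toBasis S)).PosSemidef := by
    rw [← hFsV, posSemidef_toMatrix_iff]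
    exact isPositive_of_forall_inner_nonneg hS
  have hpow (n : ℕ) : (Φ (S ^ n)).IsPositive := by
    rw [hΦ, ← posSemidef_toMatrix_iff V, hFsV, ContinuousLinearMap.toLinearMap_pow,
      ← toMatrix_pow]
    exact hS_realign.realign_pow n
  intro w
  simpa [hΦ] using inner_map_exp_nonneg Φ hpow w

/-- If `𝔉ₛ(S) ≥ 0` then `𝔉ₛ(e^S) ≥ 0`. -/
theorem sft_exp_nonneg
{Hp Hm Hmp Hpm : Type}
    [NormedAddCommGroup Hp] [InnerProductSpace ℂ Hp] [FiniteDimensional ℂ Hp]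
    [NormedAddCommGroup Hm] [InnerProductSpace ℂ Hm] [FiniteDimensional ℂ Hm]
    [NormedAddCommGroup Hmp] [InnerProductSpace ℂ Hmp] [FiniteDimensional ℂ Hmp]
    [NormedAddCommGroup Hpm] [InnerProductSpace ℂ Hpm] [FiniteDimensional ℂ Hpm]
(θ : Hp ≃ₗ⋆[ℂ] Hm)
    (hθ : ∀ x x' : Hp, ⟪x, x'⟫ = ⟪θ x', θ x⟫)
(tmp : Hm →ₗ[ℂ] Hp →ₗ[ℂ] Hmp) (tpm : Hp →ₗ[ℂ] Hm →ₗ[ℂ] Hpm)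
    (htmp : ∀ (y : Hm) (x : Hp) (y' : Hm) (x' : Hp),
      ⟪tmp y x, tmp y' x'⟫ = ⟪y, y'⟫ * ⟪x, x'⟫)
    (htpm : ∀ (x : Hp) (y : Hm) (x' : Hp) (y' : Hm),
      ⟪tpm x y, tpm x' y'⟫ = ⟪x, x'⟫ * ⟪y, y'⟫)
    (hmp_span : ⊤ ≤ Submodule.span ℂ (Set.range fun p : Hm × Hp => tmp p.1 p.2))
    (hpm_span : ⊤ ≤ Submodule.span ℂ (Set.range fun p : Hp × Hm => tpm p.1 p.2))
(Fs : (Hmp →L[ℂ] Hmp) → (Hpm →L[ℂ] Hpm))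
    (hFs : ∀ (T : Hmp →L[ℂ] Hmp) (x x' : Hp) (y y' : Hm),
      ⟪tpm x y, Fs T (tpm x' y')⟫ = ⟪tmp (θ x') x, T (tmp y' (θ.symm y))⟫)
    (S : Hmp →L[ℂ] Hmp) (hS : ∀ w : Hpm, 0 ≤ ⟪w, Fs S w⟫) :
    ∀ w : Hpm, 0 ≤ ⟪w, Fs (NormedSpace.exp S) w⟫ :=
  sft_exp_nonneg_general θ hθ tmp tpm htmp htpm hmp_span hpm_span Fs hFs S hS
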